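/- arXiv:1501.00609 — 6 statements merged into one kernel-verified Lean document; each statement's English description precedes it below -/
import Mathlib

section
/- If a : ℕ → ℕ is a sequence of positive integers with gcd(a m, a n) = a (gcd m n) for all m, n ≥ 1, and c is its characteristic sequence (a n = ∏_{d ∣ n} c d), then for any coprime positive integers m, n, and any d ∣ m with d > 1 and e ∣ n with e > 1, we have gcd(c d, c e) = 1. -/
/-!
Write `a n = c 1 * P n` with `P n = ∏_{1 < k ∣ n} c k`. For coprime `d, e` the gcd property gives
`gcd (a d) (a e) = a 1 = c 1`, i.e. `c 1 * gcd (P d) (P e) = c 1`, so `P d` and `P e` are coprime;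
and `c d ∣ P d`, `c e ∣ P e` as soon as `d, e > 1`.
-/

open Finset

lemma prod_divisors_eq_mul_prod_erase_one (c : ℕ → ℕ) {n : ℕ} (hn : n ≠ 0) :
    ∏ k ∈ n.divisors, c k = c 1 * ∏ k ∈ n.divisors.erase 1, c k :=
  (mul_prod_erase _ _ (Nat.one_mem_divisors.2 hn)).symm

lemma dvd_prod_divisors_erase_one (c : ℕ → ℕ) {n : ℕ} (hn : 1 < n) :
    c n ∣ ∏ k ∈ n.divisors.erase 1, c k :=
  dvd_prod_of_mem _ (mem_erase.2 ⟨hn.ne', Nat.mem_divisors_self n (by omega)⟩)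

lemma coprime_prod_divisors_erase_one {c : ℕ → ℕ} {d e : ℕ} (hd : d ≠ 0) (he : e ≠ 0)
    (hc1 : c 1 ≠ 0)
    (hgcd : Nat.gcd (∏ k ∈ d.divisors, c k) (∏ k ∈ e.divisors, c k) = c 1) :
    Nat.Coprime (∏ k ∈ d.divisors.erase 1, c k) (∏ k ∈ e.divisors.erase 1, c k) := by
  rw [prod_divisors_eq_mul_prod_erase_one c hd, prod_divisors_eq_mul_prod_erase_one c he,
    Nat.gcd_mul_left] at hgcd
  exact (mul_eq_left₀ hc1).1 hgcd

theorem char_seq_coprime_general (a c : ℕ → ℕ)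
    (hcpos : ∀ n, 1 ≤ n → 0 < c n)
    (hgcd : ∀ m n, 1 ≤ m → 1 ≤ n → Nat.gcd (a m) (a n) = a (Nat.gcd m n))
    (ha : ∀ n, 1 ≤ n → a n = ∏ d ∈ n.divisors, c d) :
    ∀ m n d e, 1 ≤ m → 1 ≤ n → Nat.Coprime m n →
      d ∣ m → 1 < d → e ∣ n → 1 < e → Nat.Coprime (c d) (c e) := by
  intro m n d e _ _ hmn hdm hd hen he
  have hde : Nat.Coprime d e := (hmn.coprime_dvd_left hdm).coprime_dvd_right hen
  have ha1 : a 1 = c 1 := by simpa using ha 1 le_rfl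
  have hgcd_de : Nat.gcd (∏ k ∈ d.divisors, c k) (∏ k ∈ e.divisors, c k) = c 1 := by
    rw [← ha d hd.le, ← ha e he.le, hgcd d e hd.le he.le, hde.gcd_eq_one, ha1]
  have hP := coprime_prod_divisors_erase_one (by omega) (by omega) (hcpos 1 le_rfl).ne' hgcd_de
  exact (hP.coprime_dvd_left (dvd_prod_divisors_erase_one c hd)).coprime_dvd_right
    (dvd_prod_divisors_erase_one c he)

theorem char_seq_coprime (a c : ℕ → ℕ)
    (hapos : ∀ n, 1 ≤ n → 0 < a n) (hcpos : ∀ n, 1 ≤ n → 0 < c n)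
    (hgcd : ∀ m n, 1 ≤ m → 1 ≤ n → Nat.gcd (a m) (a n) = a (Nat.gcd m n))
    (ha : ∀ n, 1 ≤ n → a n = ∏ d ∈ n.divisors, c d) :
    ∀ m n d e, 1 ≤ m → 1 ≤ n → Nat.Coprime m n →
      d ∣ m → 1 < d → e ∣ n → 1 < e → Nat.Coprime (c d) (c e) :=
  char_seq_coprime_general a c hcpos hgcd ha
end

section
/- If a n = ∏_{d ∣ n} c d for all n ≥ 1 with all values positive, then for all m, n ≥ 1, the product a 1 · a 2 ⋯ a n divides the product a (m+1) · a (m+2) ⋯ a (m+n). -/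
/-!
Exchanging the order of multiplication, `∏_{i ∈ (m, m + n]} a i = ∏_d (c d) ^ k_d`, where `k_d` is
the number of multiples of `d` in `(m, m + n]`, namely `⌊(m + n)/d⌋ - ⌊m/d⌋`. For `m = 0` this is
`⌊n/d⌋`, and `⌊m/d⌋ + ⌊n/d⌋ ≤ ⌊(m + n)/d⌋`, so the product over `(0, n]` divides the one over
`(m, m + n]` factor by factor, in any commutative monoid.
-/

open Finset

theorem Nat.Ioc_filter_dvd_card_eq_div_sub_div {m n : ℕ} (hmn : m ≤ n) (d : ℕ) :
    #{i ∈ Ioc m n | d ∣ i} = n / d - m / d := by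
  have hsplit : {i ∈ Ioc 0 n | d ∣ i} = {i ∈ Ioc 0 m | d ∣ i} ∪ {i ∈ Ioc m n | d ∣ i} := by
    rw [← filter_union, Ioc_union_Ioc_eq_Ioc m.zero_le hmn]
  have hdisj : Disjoint {i ∈ Ioc 0 m | d ∣ i} {i ∈ Ioc m n | d ∣ i} :=
    disjoint_filter_filter (Ioc_disjoint_Ioc_of_le le_rfl)
  have hcard := card_union_of_disjoint hdisj
  rw [← hsplit, Nat.Ioc_filter_dvd_card_eq_div, Nat.Ioc_filter_dvd_card_eq_div] at hcard
  omega

theorem prod_prod_divisors_eq_prod_pow_card {M : Type*} [CommMonoid M] (c : ℕ → M)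
    {s : Finset ℕ} {N : ℕ} (hs : s ⊆ Ioc 0 N) :
    ∏ i ∈ s, ∏ d ∈ i.divisors, c d = ∏ d ∈ Ioc 0 N, c d ^ #{i ∈ s | d ∣ i} := by
  rw [prod_comm' (t' := Ioc 0 N) (s' := fun d ↦ {i ∈ s | d ∣ i})]
  · simp_rw [prod_const]
  · intro i d
    simp only [Nat.mem_divisors, mem_filter, mem_Ioc]
    constructor
    · rintro ⟨hi, hdi, -⟩
      obtain ⟨hi_pos, hi_le⟩ := mem_Ioc.1 (hs hi)
      exact ⟨⟨hi, hdi⟩, Nat.pos_of_dvd_of_pos hdi hi_pos, (Nat.le_of_dvd hi_pos hdi).trans hi_le⟩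
    · rintro ⟨⟨hi, hdi⟩, -⟩
      exact ⟨hi, hdi, (mem_Ioc.1 (hs hi)).1.ne'⟩

theorem prod_prod_divisors_Ioc_dvd_prod_prod_divisors_Ioc {M : Type*} [CommMonoid M]
    (c : ℕ → M) (m n : ℕ) :
    ∏ i ∈ Ioc 0 n, ∏ d ∈ i.divisors, c d ∣ ∏ i ∈ Ioc m (m + n), ∏ d ∈ i.divisors, c d := by
  rw [prod_prod_divisors_eq_prod_pow_card c subset_rfl,
    prod_prod_divisors_eq_prod_pow_card c (Ioc_subset_Ioc_left m.zero_le)]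
  calc ∏ d ∈ Ioc 0 n, c d ^ #{i ∈ Ioc 0 n | d ∣ i}
      ∣ ∏ d ∈ Ioc 0 n, c d ^ #{i ∈ Ioc m (m + n) | d ∣ i} := by
        refine prod_dvd_prod_of_dvd _ _ fun d _ ↦ pow_dvd_pow _ ?_
        rw [Nat.Ioc_filter_dvd_card_eq_div, Nat.Ioc_filter_dvd_card_eq_div_sub_div (by omega)]
        have : m / d + n / d ≤ (m + n) / d := Nat.div_add_div_le_add_div
        omega
    _ ∣ ∏ d ∈ Ioc 0 (m + n), c d ^ #{i ∈ Ioc m (m + n) | d ∣ i} :=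
        prod_dvd_prod_of_subset _ _ _ (Ioc_subset_Ioc_right (by omega))

theorem prod_first_dvd_consecutive_general (a c : ℕ → ℕ)
    (ha : ∀ n, 1 ≤ n → a n = ∏ d ∈ n.divisors, c d) :
    ∀ m n, 1 ≤ m → 1 ≤ n →
      (∏ i ∈ Finset.Icc 1 n, a i) ∣ ∏ i ∈ Finset.Icc 1 n, a (m + i) := by
  intro m n _ _
  have hIcc : Icc 1 n = Ioc 0 n := Icc_add_one_left_eq_Ioc 0 n
  have hshift : ∏ i ∈ Ioc 0 n, a (m + i) = ∏ i ∈ Ioc m (m + n), a i := by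
    simpa using (prod_map (Ioc 0 n) (addLeftEmbedding m) a).symm
  rw [hIcc, hshift, prod_congr rfl fun i hi ↦ ha i (mem_Ioc.1 hi).1,
    prod_congr rfl fun i hi ↦ ha i (mem_Ioc.1 hi).1.pos]
  exact prod_prod_divisors_Ioc_dvd_prod_prod_divisors_Ioc c m n

theorem prod_first_dvd_consecutive (a c : ℕ → ℕ)
    (hc : ∀ n, 1 ≤ n → 0 < c n)
    (ha : ∀ n, 1 ≤ n → a n = ∏ d ∈ n.divisors, c d) :
    ∀ m n, 1 ≤ m → 1 ≤ n →
      (∏ i ∈ Finset.Icc 1 n, a i) ∣ ∏ i ∈ Finset.Icc 1 n, a (m + i) :=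
  prod_first_dvd_consecutive_general a c ha
end

section
/- If m, n > 1 have the same radical (rad(m) = rad(n)), then ∏_{d ∣ n} d^{μ(n/d)} = ∏_{d ∣ m} d^{μ(m/d)} (as positive rationals). -/
def rad (n : ℕ) : ℕ := ∏ p ∈ n.primeFactors, p

/-!
Taking logarithms, `∏_{d ∣ n} d ^ μ(n/d) = exp Λ(n)` is the Möbius inversion of
`∑_{d ∣ n} Λ(d) = log n`, and `Λ(n)` only depends on the set of prime factors of `n`.
-/

open ArithmeticFunction
open scoped ArithmeticFunction.Moebius

lemma primeFactors_rad (n : ℕ) : (rad n).primeFactors = n.primeFactors :=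
  Nat.primeFactors_prod fun _ => Nat.prime_of_mem_primeFactors

lemma primeFactors_eq_of_rad_eq {m n : ℕ} (h : rad m = rad n) :
    m.primeFactors = n.primeFactors := by
  rw [← primeFactors_rad m, h, primeFactors_rad]

lemma IsPrimePow.primeFactors_eq_singleton_minFac {n : ℕ} (hn : IsPrimePow n) :
    n.primeFactors = {n.minFac} := by
  obtain ⟨p, k, hp, hk, rfl⟩ := isPrimePow_nat_iff n |>.1 hn
  rw [Nat.primeFactors_prime_pow hk.ne' hp, hp.pow_minFac hk.ne']

lemma vonMangoldt_eq_of_primeFactors_eq {m n : ℕ} (h : m.primeFactors = n.primeFactors) :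
    Λ m = Λ n := by
  have hpp : IsPrimePow m ↔ IsPrimePow n := by
    simp only [isPrimePow_iff_card_primeFactors_eq_one, h]
  rw [vonMangoldt_apply, vonMangoldt_apply]
  by_cases hm : IsPrimePow m
  · have hn := hpp.1 hm
    have hminFac : m.minFac = n.minFac := Finset.singleton_injective <| by
      rw [← hm.primeFactors_eq_singleton_minFac, h, hn.primeFactors_eq_singleton_minFac]
    rw [if_pos hm, if_pos hn, hminFac]
  · rw [if_neg hm, if_neg (hpp.not.1 hm)]

lemma log_prod_divisors_zpow_moebius (n : ℕ) :
    Real.log (∏ d ∈ n.divisors, (d : ℝ) ^ μ (n / d)) = Λ n := by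
  rw [Real.log_prod fun d hd => by have := Nat.pos_of_mem_divisors hd; positivity,
    ← log_mul_moebius_eq_vonMangoldt, mul_apply,
    Nat.sum_divisorsAntidiagonal (fun a b => log a * (μ : ArithmeticFunction ℝ) b)]
  refine Finset.sum_congr rfl fun d _ => ?_
  simp [Real.log_zpow, mul_comm]

lemma prod_divisors_zpow_moebius_eq_exp_vonMangoldt (n : ℕ) :
    ∏ d ∈ n.divisors, (d : ℝ) ^ μ (n / d) = Real.exp (Λ n) := by
  rw [← log_prod_divisors_zpow_moebius, Real.exp_log]
  exact Finset.prod_pos fun d hd => by have := Nat.pos_of_mem_divisors hd; positivity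

theorem mobius_prod_eq_of_rad_eq_general (m n : ℕ)
    (h : rad m = rad n) :
    ∏ d ∈ n.divisors, (d : ℚ) ^ (ArithmeticFunction.moebius (n / d)) =
      ∏ d ∈ m.divisors, (d : ℚ) ^ (ArithmeticFunction.moebius (m / d)) := by
  have hreal :
      ∏ d ∈ n.divisors, (d : ℝ) ^ μ (n / d) = ∏ d ∈ m.divisors, (d : ℝ) ^ μ (m / d) := by
    rw [prod_divisors_zpow_moebius_eq_exp_vonMangoldt,
      prod_divisors_zpow_moebius_eq_exp_vonMangoldt,
      vonMangoldt_eq_of_primeFactors_eq (primeFactors_eq_of_rad_eq h)]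
  exact Rat.cast_injective (α := ℝ) (by push_cast; exact hreal)

theorem mobius_prod_eq_of_rad_eq (m n : ℕ) (hm : 1 < m) (hn : 1 < n)
    (h : rad m = rad n) :
    ∏ d ∈ n.divisors, (d : ℚ) ^ (ArithmeticFunction.moebius (n / d)) =
      ∏ d ∈ m.divisors, (d : ℚ) ^ (ArithmeticFunction.moebius (m / d)) :=
  mobius_prod_eq_of_rad_eq_general m n h
end

section
/- In the polynomial ring ℤ[x,y], the product (x-y)(x²-y²)⋯(xⁿ-yⁿ) divides the product (x^{m+1}-y^{m+1})(x^{m+2}-y^{m+2})⋯(x^{m+n}-y^{m+n}) for all m, n ≥ 1. (A tractable integer version: for all integers x > y ≥ 1 and all m, n ≥ 1, ∏_{i=1}^{n}(x^i - y^i) divides ∏_{i=1}^{n}(x^{m+i} - y^{m+i}).) -/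
/-!
The sequence `f k = x ^ k - y ^ k` satisfies `f (k + l) ∈ (f k, f l)`, and for any such sequence
`P m n = f (m + 1) ⋯ f (m + n)` is divisible by `P 0 n`, by induction on `m` and then `n`:
splitting the last factor `f (m + 1 + n + 1)` of `P (m + 1) (n + 1)` writes it as a combination
of `P m (n + 1)` and `P (m + 1) n * f (n + 1)`, both divisible by `P 0 (n + 1)` by induction.
-/

open Finset

theorem Finset.prod_Icc_one_eq_prod_range {M : Type*} [CommMonoid M] (f : ℕ → M) (n : ℕ) :
    ∏ i ∈ Icc 1 n, f i = ∏ i ∈ range n, f (i + 1) := by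
  rw [range_eq_Ico, prod_Ico_add', zero_add, Ico_add_one_right_eq_Icc]

theorem prod_range_dvd_prod_range_add {R : Type*} [CommRing R] (f : ℕ → R)
    (hf : ∀ k l, f (k + l) ∈ Ideal.span {f k, f l}) (m n : ℕ) :
    ∏ i ∈ range n, f (i + 1) ∣ ∏ i ∈ range n, f (m + i + 1) := by
  induction m generalizing n with
  | zero => simp
  | succ m ihm =>
    induction n with
    | zero => simp
    | succ n ihn =>
      obtain ⟨c, d, hcd⟩ := Ideal.mem_span_pair.1 (hf (m + 1) (n + 1))
      have hsplit : f (m + 1 + n + 1) = c * f (m + 1) + d * f (n + 1) := hcd.symm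
      have hshift : (∏ i ∈ range n, f (m + 1 + i + 1)) * f (m + 1) =
          ∏ i ∈ range (n + 1), f (m + i + 1) := by
        rw [prod_range_succ' (fun i => f (m + i + 1))]
        simp only [Nat.add_right_comm m 1, ← add_assoc, add_zero]
      have hdiag : ∏ i ∈ range (n + 1), f (i + 1) ∣
          (∏ i ∈ range n, f (m + 1 + i + 1)) * f (n + 1) := by
        rw [prod_range_succ]
        exact mul_dvd_mul_right ihn _
      rw [prod_range_succ (fun i => f (m + 1 + i + 1)), hsplit, mul_add, mul_left_comm _ c, hshift,
        mul_left_comm _ d]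
      exact dvd_add ((ihm (n + 1)).mul_left c) (hdiag.mul_left d)

open MvPolynomial in
theorem poly_prod_dvd_general (m n : ℕ) :
    (∏ i ∈ Finset.Icc 1 n, ((X 0 : MvPolynomial (Fin 2) ℤ) ^ i - (X 1) ^ i)) ∣
      ∏ i ∈ Finset.Icc 1 n, ((X 0 : MvPolynomial (Fin 2) ℤ) ^ (m + i) - (X 1) ^ (m + i)) := by
  have hf : ∀ k l, (X 0 ^ (k + l) - X 1 ^ (k + l) : MvPolynomial (Fin 2) ℤ) ∈
      Ideal.span {X 0 ^ k - X 1 ^ k, X 0 ^ l - X 1 ^ l} :=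
    fun k l => Ideal.mem_span_pair.2 ⟨X 0 ^ l, X 1 ^ k, by ring⟩
  simpa only [prod_Icc_one_eq_prod_range, add_assoc] using
    prod_range_dvd_prod_range_add _ hf m n

open MvPolynomial in
theorem poly_prod_dvd (m n : ℕ) (hm : 1 ≤ m) (hn : 1 ≤ n) :
    (∏ i ∈ Finset.Icc 1 n, ((X 0 : MvPolynomial (Fin 2) ℤ) ^ i - (X 1) ^ i)) ∣
      ∏ i ∈ Finset.Icc 1 n, ((X 0 : MvPolynomial (Fin 2) ℤ) ^ (m + i) - (X 1) ^ (m + i)) :=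
  poly_prod_dvd_general m n
end

section
/- For all m, n ≥ 1, the product F₁F₂⋯Fₙ of the first n Fibonacci numbers divides the product F_{m+1}F_{m+2}⋯F_{m+n} of any n consecutive Fibonacci numbers. -/
/-!
Let `P m n = F_{m+1} ⋯ F_{m+n}` (`Nat.fibProd m n`). Splitting off the last factor and expanding
`F_{m+n+2} = F_m F_{n+1} + F_{m+1} F_{n+2}` gives
`P (m+1) (n+1) = F_m · P (m+1) n · F_{n+1} + F_{n+2} · P m (n+1)`.
Both summands are multiples of `P 0 (n+1) = P 0 n · F_{n+1}`, the first since `P 0 n ∣ P (m+1) n`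
and the second since `P 0 (n+1) ∣ P m (n+1)`, so a double induction on `m` and `n` shows that
`P 0 n` divides `P m n`.
-/

namespace Nat

def fibProd (m n : ℕ) : ℕ := ∏ i ∈ Finset.range n, fib (m + i + 1)

lemma fibProd_succ (m n : ℕ) : fibProd m (n + 1) = fibProd m n * fib (m + n + 1) :=
  Finset.prod_range_succ _ _

lemma fibProd_succ' (m n : ℕ) : fibProd m (n + 1) = fibProd (m + 1) n * fib (m + 1) := by
  simp only [fibProd, Finset.prod_range_succ', add_zero]
  congr 1
  exact Finset.prod_congr rfl fun i _ ↦ by ring_nf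

lemma prod_Icc_fib_eq_fibProd (m n : ℕ) : ∏ i ∈ Finset.Icc 1 n, fib (m + i) = fibProd m n := by
  induction n with
  | zero => rfl
  | succ n ih => rw [Finset.prod_Icc_succ_top (by omega), ih, fibProd_succ, add_assoc]

lemma fibProd_succ_succ (m n : ℕ) :
    fibProd (m + 1) (n + 1) =
      fib m * (fibProd (m + 1) n * fib (n + 1)) + fib (n + 2) * fibProd m (n + 1) := by
  rw [fibProd_succ, fibProd_succ', show m + 1 + n + 1 = m + (n + 1) + 1 by ring, fib_add]
  ring

theorem fibProd_zero_dvd (m n : ℕ) : fibProd 0 n ∣ fibProd m n := by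
  induction m generalizing n with
  | zero => rfl
  | succ m ihm =>
    induction n with
    | zero => rfl
    | succ n ihn =>
      rw [fibProd_succ_succ]
      refine dvd_add (Dvd.dvd.mul_left ?_ _) ((ihm (n + 1)).mul_left _)
      rw [fibProd_succ, zero_add]
      exact mul_dvd_mul_right ihn _

end Nat

theorem fib_prod_dvd_general (m n : ℕ) :
    (∏ i ∈ Finset.Icc 1 n, Nat.fib i) ∣ ∏ i ∈ Finset.Icc 1 n, Nat.fib (m + i) := by
  have h₀ : ∏ i ∈ Finset.Icc 1 n, Nat.fib i = Nat.fibProd 0 n := by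
    simpa only [zero_add] using Nat.prod_Icc_fib_eq_fibProd 0 n
  rw [h₀, Nat.prod_Icc_fib_eq_fibProd]
  exact Nat.fibProd_zero_dvd m n

theorem fib_prod_dvd (m n : ℕ) (hm : 1 ≤ m) (hn : 1 ≤ n) :
    (∏ i ∈ Finset.Icc 1 n, Nat.fib i) ∣ ∏ i ∈ Finset.Icc 1 n, Nat.fib (m + i) :=
  fib_prod_dvd_general m n
end

section
/- Let G : ℕ → ℕ be defined by G₀ = 0, G₁ = 1, G_n = a·G_{n-1} + b·G_{n-2} for n ≥ 2, where a, b are positive integers with gcd(a, b) = 1. Then gcd(G_m, G_n) = G_{gcd(m,n)} for all m, n ≥ 1. -/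
theorem lucas_strong_divisibility (a b : ℕ) (ha : 0 < a) (hb : 0 < b)
    (hab : Nat.Coprime a b) (G : ℕ → ℕ) (hG0 : G 0 = 0) (hG1 : G 1 = 1)
    (hGrec : ∀ n, G (n + 2) = a * G (n + 1) + b * G n) :
    ∀ m n, 1 ≤ m → 1 ≤ n → Nat.gcd (G m) (G n) = G (Nat.gcd m n) := by
  -- addition formula
  have hadd : ∀ m n, G (m + n + 1) = G (m + 1) * G (n + 1) + b * G m * G n := by
    intro m
    induction m using Nat.twoStepInduction with
    | zero => intro n; simp [hG0, hG1]
    | one =>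
      intro n
      have e : 1 + n + 1 = n + 2 := by ring
      have h2 : G 2 = a := by
        rw [show (2:ℕ) = 0 + 2 from rfl, hGrec 0, hG0, hG1]; ring
      rw [e, hGrec n, hG1, h2]; ring
    | more m ih ih1 =>
      intro n
      rw [show m + 2 + n + 1 = (m + n + 1) + 2 from by ring, hGrec,
        show m + n + 1 + 1 = m + 1 + n + 1 from by ring, ih1 n, ih n,
        show m + 2 + 1 = m + 1 + 2 from by ring, hGrec (m + 1),
        show m + 1 + 1 = m + 2 from rfl, hGrec m]
      ring
  -- b is coprime to G (n+1)
  have hbG : ∀ n, Nat.Coprime b (G (n + 1)) := by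
    intro n
    induction n with
    | zero => simp [hG1]
    | succ n ih =>
      have h : Nat.gcd b (a * G (n + 1) + b * G n) = Nat.gcd b (a * G (n + 1)) :=
        Nat.gcd_add_mul_left_right b (a * G (n + 1)) (G n)
      unfold Nat.Coprime
      rw [hGrec n, h]
      exact Nat.Coprime.mul_right hab.symm ih
  -- consecutive terms coprime
  have hcons : ∀ n, Nat.Coprime (G (n + 1)) (G n) := by
    intro n
    induction n with
    | zero => simp [hG0, hG1]
    | succ n ih =>
      have h2 : Nat.gcd (G (n + 1)) (a * G (n + 1) + b * G n)
          = Nat.gcd (G (n + 1)) (b * G n) := by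
        rw [show a * G (n + 1) + b * G n = b * G n + G (n + 1) * a from by ring]
        exact Nat.gcd_add_mul_left_right _ _ _
      show Nat.gcd (G (n + 2)) (G (n + 1)) = 1
      rw [hGrec n, Nat.gcd_comm, h2]
      exact Nat.Coprime.mul_right (hbG n).symm ih
  -- gcd step lemma
  have hstep : ∀ j r, Nat.gcd (G (j + 1)) (G (r + (j + 1))) = Nat.gcd (G (j + 1)) (G r) := by
    intro j r
    rw [show r + (j + 1) = r + j + 1 from rfl, hadd r j]
    have h1 : Nat.gcd (G (j + 1)) (G (r + 1) * G (j + 1) + b * G r * G j)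
        = Nat.gcd (G (j + 1)) ((b * G j) * G r) := by
      rw [show G (r + 1) * G (j + 1) + b * G r * G j
          = (b * G j) * G r + G (j + 1) * G (r + 1) from by ring]
      exact Nat.gcd_add_mul_left_right _ _ _
    rw [h1]
    exact Nat.Coprime.gcd_mul_left_cancel_right (G r)
      (Nat.Coprime.mul (hbG j) (hcons j).symm)
  -- iterated version
  have hmul : ∀ j k r, Nat.gcd (G (j + 1)) (G (r + k * (j + 1))) = Nat.gcd (G (j + 1)) (G r) := by
    intro j k
    induction k with
    | zero => intro r; simp
    | succ k ih =>
      intro r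
      rw [show r + (k + 1) * (j + 1) = (r + k * (j + 1)) + (j + 1) from by ring, hstep, ih]
  -- main result for all m n
  have main : ∀ m n, Nat.gcd (G m) (G n) = G (Nat.gcd m n) := by
    intro m n
    induction m, n using Nat.gcd.induction with
    | H0 n => simp [hG0]
    | H1 m n hm ih =>
      obtain ⟨j, rfl⟩ : ∃ j, m = j + 1 := ⟨m - 1, (Nat.succ_pred_eq_of_pos hm).symm⟩
      rw [Nat.gcd_rec (j + 1) n]
      conv_lhs => rw [show n = n % (j + 1) + n / (j + 1) * (j + 1) from
        (Nat.mod_add_div' n (j + 1)).symm]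
      rw [hmul, Nat.gcd_comm]
      exact ih
  intro m n _ _
  exact main m n
end
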